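/- Let α, ξ ∈ F_2^n and let H ⊆ F_2^n be a doubly even binary linear code which is self-dual with respect to α. If wt(α·ξ) ≡ 0 (mod 4), then there exists a doubly even code K which is self-dual with respect to α, such that K ⊆ H + F_2·(α·ξ) and ⟨β,ξ⟩ = 0 for every β ∈ K. -/
import Mathlib

/-- The weight of a binary vector: the number of nonzero coordinates. -/
def wt {n : ℕ} (α : Fin n → ZMod 2) : ℕ :=
  (Finset.univ.filter (fun i => α i ≠ 0)).card

/-- The standard bilinear form `⟨α,β⟩ = ∑ i, α i * β i` on `F_2^n`. -/
def ip {n : ℕ} (α β : Fin n → ZMod 2) : ZMod 2 := ∑ i, α i * β i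

/-- The support of a binary vector. -/
def supp {n : ℕ} (α : Fin n → ZMod 2) : Set (Fin n) := {i | α i ≠ 0}

/-- The support of a code: the union of the supports of its codewords. -/
def codeSupp {n : ℕ} (S : Set (Fin n → ZMod 2)) : Set (Fin n) := ⋃ h ∈ S, supp h

/-- `H^{⊥_β}`: vectors with support inside `supp β` orthogonal to every element of `H`. -/
def perpWrt {n : ℕ} (β : Fin n → ZMod 2) (H : Set (Fin n → ZMod 2)) :
    Set (Fin n → ZMod 2) :=
  {δ | supp δ ⊆ supp β ∧ ∀ h ∈ H, ip δ h = 0}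

/-- `H` is self-dual with respect to `β` if `supp H = supp β` and `H^{⊥_β} = H`. -/
def selfDualWrt {n : ℕ} (β : Fin n → ZMod 2) (H : Set (Fin n → ZMod 2)) : Prop :=
  codeSupp H = supp β ∧ perpWrt β H = H

lemma zmod2_cases (c : ZMod 2) : c = 0 ∨ c = 1 := by revert c; decide
lemma zmod2_add_self (c : ZMod 2) : c + c = 0 := by revert c; decide
lemma zmod2_add_eq_zero {a b : ZMod 2} (h : a + b = 0) : a = b := by revert a b; decide

lemma ip_comm {n : ℕ} (a b : Fin n → ZMod 2) : ip a b = ip b a := by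
  simp [ip, mul_comm]

lemma ip_add_left {n : ℕ} (a b c : Fin n → ZMod 2) : ip (a+b) c = ip a c + ip b c := by
  simp [ip, add_mul, Finset.sum_add_distrib]

lemma ip_add_right {n : ℕ} (a b c : Fin n → ZMod 2) : ip a (b+c) = ip a b + ip a c := by
  simp [ip, mul_add, Finset.sum_add_distrib]

lemma ip_smul_left {n : ℕ} (c : ZMod 2) (a b : Fin n → ZMod 2) :
    ip (c • a) b = c * ip a b := by
  simp [ip, Finset.mul_sum, Pi.smul_apply, smul_eq_mul, mul_assoc]

lemma ip_smul_right {n : ℕ} (c : ZMod 2) (a b : Fin n → ZMod 2) :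
    ip a (c • b) = c * ip a b := by
  rw [ip_comm, ip_smul_left, ip_comm]

lemma ip_eq_wt {n : ℕ} (a b : Fin n → ZMod 2) : ip a b = (wt (a*b) : ZMod 2) := by
  rw [ip, wt, Finset.card_filter, Nat.cast_sum]
  apply Finset.sum_congr rfl
  intro i _
  rcases zmod2_cases (a i) with h|h <;> rcases zmod2_cases (b i) with h'|h' <;>
    simp [h, h', Pi.mul_apply]

lemma mul_self_eq' {n : ℕ} (a : Fin n → ZMod 2) : a * a = a := by
  funext i; rcases zmod2_cases (a i) with h|h <;> simp [Pi.mul_apply, h]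

lemma wt_add_mul {n : ℕ} (a b : Fin n → ZMod 2) :
    wt (a+b) + 2 * wt (a*b) = wt a + wt b := by
  classical
  unfold wt
  set s := Finset.univ.filter (fun i => a i ≠ 0) with hs
  set t := Finset.univ.filter (fun i => b i ≠ 0) with ht
  have h1 : Finset.univ.filter (fun i => (a+b) i ≠ 0) = (s ∪ t) \ (s ∩ t) := by
    ext i
    rcases zmod2_cases (a i) with h|h <;> rcases zmod2_cases (b i) with h'|h' <;>
      simp [hs, ht, h, h', Pi.add_apply, show (1:ZMod 2)+1 = 0 by decide]
  have h2 : Finset.univ.filter (fun i => (a*b) i ≠ 0) = s ∩ t := by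
    ext i
    rcases zmod2_cases (a i) with h|h <;> rcases zmod2_cases (b i) with h'|h' <;>
      simp [hs, ht, h, h']
  rw [h1, h2, Finset.card_sdiff_of_subset (Finset.inter_subset_union)]
  have h3 := Finset.card_union_add_card_inter s t
  have h4 : (s ∩ t).card ≤ (s ∪ t).card := Finset.card_le_card Finset.inter_subset_union
  omega

lemma supp_mul_subset {n : ℕ} (α ξ : Fin n → ZMod 2) : supp (α*ξ) ⊆ supp α := by
  intro i hi h0
  exact hi (by simp [Pi.mul_apply, h0])

lemma supp_add_subset {n : ℕ} (a b : Fin n → ZMod 2) : supp (a+b) ⊆ supp a ∪ supp b := by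
  intro i hi
  by_contra h
  simp only [Set.mem_union, supp, Set.mem_setOf_eq, not_or, not_not] at h
  exact hi (by simp [Pi.add_apply, h.1, h.2])

lemma ip_mul_of_supp {n : ℕ} {δ α : Fin n → ZMod 2} (h : supp δ ⊆ supp α)
    (ξ : Fin n → ZMod 2) : ip δ (α*ξ) = ip δ ξ := by
  unfold ip
  apply Finset.sum_congr rfl
  intro i _
  rcases zmod2_cases (δ i) with h0|h1
  · simp [h0]
  · have hα : α i ≠ 0 := h (by simp [supp, h1])
    have hα1 : α i = 1 := (zmod2_cases (α i)).resolve_left hα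
    simp [Pi.mul_apply, h1, hα1]

lemma ip_single {n : ℕ} (i : Fin n) (k : Fin n → ZMod 2) :
    ip (Pi.single i 1) k = k i := by
  unfold ip
  rw [Finset.sum_eq_single i]
  · simp
  · intro j _ hj; simp [Pi.single_apply, hj]
  · simp

def ipL {n : ℕ} (ξ : Fin n → ZMod 2) : (Fin n → ZMod 2) →ₗ[ZMod 2] ZMod 2 where
  toFun β := ip β ξ
  map_add' a b := ip_add_left a b ξ
  map_smul' c a := by
    simp [ip, Finset.mul_sum, Pi.smul_apply, smul_eq_mul, mul_assoc]

lemma wt_even_of_ip_zero {n : ℕ} {a b : Fin n → ZMod 2} (h : ip a b = 0) :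
    2 ∣ wt (a*b) := by
  have := ip_eq_wt a b
  rw [h] at this
  exact (ZMod.natCast_eq_zero_iff _ 2).mp this.symm

theorem stmt9 {n : ℕ} (α ξ : Fin n → ZMod 2)
    (H : Submodule (ZMod 2) (Fin n → ZMod 2))
    (hde : ∀ x ∈ H, 4 ∣ wt x)
    (hsd : selfDualWrt α (H : Set (Fin n → ZMod 2)))
    (hwt : wt (α * ξ) % 4 = 0) :
    ∃ K : Submodule (ZMod 2) (Fin n → ZMod 2),
      (∀ x ∈ K, 4 ∣ wt x) ∧ selfDualWrt α (K : Set (Fin n → ZMod 2)) ∧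
      K ≤ H ⊔ Submodule.span (ZMod 2) {α * ξ} ∧
      ∀ β ∈ K, ip β ξ = 0 := by
  classical
  set γ := α * ξ with hγdef
  have hsuppH : ∀ h ∈ H, supp h ⊆ supp α := by
    intro h hh
    rw [← hsd.1]
    exact Set.subset_biUnion_of_mem hh
  have horth : ∀ h ∈ H, ∀ h' ∈ H, ip h h' = 0 := by
    intro h hh h' hh'
    have hm : h ∈ perpWrt α (H : Set (Fin n → ZMod 2)) := by rw [hsd.2]; exact hh
    exact hm.2 h' hh'
  have hγsupp : supp γ ⊆ supp α := supp_mul_subset α ξ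
  have hipγ : ∀ δ : Fin n → ZMod 2, supp δ ⊆ supp α → ip δ γ = ip δ ξ :=
    fun δ h => ip_mul_of_supp h ξ
  have hwt4 : 4 ∣ wt γ := Nat.dvd_of_mod_eq_zero hwt
  have hγγ : ip γ γ = 0 := by
    rw [ip_eq_wt, mul_self_eq']
    have h2 : (2:ℕ) ∣ wt γ := dvd_trans (by norm_num) hwt4
    exact (ZMod.natCast_eq_zero_iff _ 2).mpr h2
  by_cases hall : ∀ h ∈ H, ip h ξ = 0
  · exact ⟨H, hde, hsd, le_sup_left, hall⟩
  · push_neg at hall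
    obtain ⟨h₁, hh₁, hih₁⟩ := hall
    have hih₁1 : ip h₁ ξ = 1 := (zmod2_cases _).resolve_left hih₁
    set K := (H ⊓ LinearMap.ker (ipL ξ)) ⊔ Submodule.span (ZMod 2) {γ} with hKdef
    have hγK : γ ∈ K := Submodule.mem_sup_right (Submodule.mem_span_singleton_self γ)
    have hH0K : ∀ h, h ∈ H → ip h ξ = 0 → h ∈ K := fun h hh h0 =>
      Submodule.mem_sup_left (Submodule.mem_inf.mpr ⟨hh, LinearMap.mem_ker.mpr h0⟩)
    have hKmem : ∀ x ∈ K, ∃ h ∈ H, ip h ξ = 0 ∧ (x = h ∨ x = h + γ) := by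
      intro x hx
      obtain ⟨y, hy, z, hz, rfl⟩ := Submodule.mem_sup.mp hx
      obtain ⟨c, rfl⟩ := Submodule.mem_span_singleton.mp hz
      obtain ⟨hyH, hyk⟩ := Submodule.mem_inf.mp hy
      have hyξ : ip y ξ = 0 := LinearMap.mem_ker.mp hyk
      rcases zmod2_cases c with rfl|rfl
      · exact ⟨y, hyH, hyξ, Or.inl (by simp)⟩
      · exact ⟨y, hyH, hyξ, Or.inr (by simp)⟩
    have hKsupp : ∀ x ∈ K, supp x ⊆ supp α := by
      intro x hx
      obtain ⟨h, hh, h0, rfl|rfl⟩ := hKmem x hx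
      · exact hsuppH x hh
      · exact (supp_add_subset h γ).trans (Set.union_subset (hsuppH h hh) hγsupp)
    have hHγ0 : ∀ h ∈ H, ip h ξ = 0 → ip h γ = 0 := by
      intro h hh h0
      rw [hipγ h (hsuppH h hh)]; exact h0
    have hKde : ∀ x ∈ K, 4 ∣ wt x := by
      intro x hx
      obtain ⟨h, hh, h0, rfl|rfl⟩ := hKmem x hx
      · exact hde x hh
      · have h2 : (2:ℕ) ∣ wt (h*γ) := wt_even_of_ip_zero (hHγ0 h hh h0)
        have hsum := wt_add_mul h γ
        have h4 := hde h hh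
        omega
    have hδsub : perpWrt α (K : Set (Fin n → ZMod 2)) ⊆ (K : Set (Fin n → ZMod 2)) := by
      intro δ hδ
      obtain ⟨hδs, hδK⟩ := hδ
      have hδγ : ip δ γ = 0 := hδK γ hγK
      set c := ip δ h₁ with hc
      have hδH : ∀ h ∈ H, ip δ h = ip h ξ * c := by
        intro h hh
        have hmem : h + (ip h ξ) • h₁ ∈ K := by
          apply hH0K
          · exact H.add_mem hh (H.smul_mem _ hh₁)
          · rw [ip_add_left, ip_smul_left, hih₁1, mul_one]
            exact zmod2_add_self _
        have h0 := hδK _ hmem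
        rw [ip_add_right, ip_smul_right, ← hc] at h0
        exact zmod2_add_eq_zero h0
      have hδ'supp : supp (δ + c • γ) ⊆ supp α := by
        rcases zmod2_cases c with hc0|hc0
        · rw [hc0, zero_smul, add_zero]; exact hδs
        · rw [hc0, one_smul]
          exact (supp_add_subset δ γ).trans (Set.union_subset hδs hγsupp)
      have hδ'H : δ + c • γ ∈ H := by
        have hm : δ + c • γ ∈ perpWrt α (H : Set (Fin n → ZMod 2)) := by
          refine ⟨hδ'supp, ?_⟩
          intro h hh
          rw [ip_add_left, ip_smul_left, hδH h hh]
          have hγh : ip γ h = ip h ξ := by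
            rw [ip_comm]; exact hipγ h (hsuppH h hh)
          rw [hγh, mul_comm]
          exact zmod2_add_self _
        rwa [hsd.2] at hm
      have hδ'ξ : ip (δ + c • γ) ξ = 0 := by
        rw [← hipγ _ hδ'supp, ip_add_left, ip_smul_left, hδγ, hγγ, mul_zero, add_zero]
      have hδ'K : δ + c • γ ∈ K := hH0K _ hδ'H hδ'ξ
      have hδeq : δ = (δ + c • γ) + c • γ := by
        rw [add_assoc, ← add_smul, zmod2_add_self, zero_smul, add_zero]
      rw [SetLike.mem_coe, hδeq]
      exact K.add_mem hδ'K (K.smul_mem c hγK)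
    have hsub2 : (K : Set (Fin n → ZMod 2)) ⊆ perpWrt α (K : Set (Fin n → ZMod 2)) := by
      intro x hx
      refine ⟨hKsupp x hx, ?_⟩
      intro y hy
      obtain ⟨h, hh, h0, rfl|rfl⟩ := hKmem x hx
      · obtain ⟨h', hh', h0', rfl|rfl⟩ := hKmem y hy
        · exact horth x hh y hh'
        · rw [ip_add_right, horth x hh h' hh', hHγ0 x hh h0, add_zero]
      · obtain ⟨h', hh', h0', rfl|rfl⟩ := hKmem y hy
        · rw [ip_add_left, horth h hh y hh', ip_comm, hHγ0 y hh' h0', add_zero]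
        · rw [ip_add_left, ip_add_right, ip_add_right, horth h hh h' hh',
            hHγ0 h hh h0, ip_comm γ h', hHγ0 h' hh' h0', hγγ]
          simp
    have hKperp : perpWrt α (K : Set (Fin n → ZMod 2)) = K :=
      Set.Subset.antisymm hδsub hsub2
    have hcs : codeSupp (K : Set (Fin n → ZMod 2)) = supp α := by
      apply Set.Subset.antisymm
      · apply Set.iUnion₂_subset
        intro x hx
        exact hKsupp x hx
      · intro i hi
        by_contra hni
        have hall0 : ∀ k ∈ K, k i = 0 := by
          intro k hk
          by_contra hki
          exact hni (Set.mem_biUnion hk hki)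
        have he : Pi.single i 1 ∈ perpWrt α (K : Set (Fin n → ZMod 2)) := by
          constructor
          · intro j hj
            have hne : (Pi.single i 1 : Fin n → ZMod 2) j ≠ 0 := hj
            have hji : j = i := by
              by_contra hne'
              exact hne (Pi.single_eq_of_ne hne' 1)
            rwa [hji]
          · intro k hk; rw [ip_single]; exact hall0 k hk
        rw [hKperp] at he
        have := hall0 _ he
        rw [Pi.single_eq_same] at this
        exact one_ne_zero this
    refine ⟨K, hKde, ⟨hcs, hKperp⟩, ?_, ?_⟩
    · exact sup_le_sup_right inf_le_left _
    · intro β hβ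
      obtain ⟨h, hh, h0, rfl|rfl⟩ := hKmem β hβ
      · exact h0
      · rw [ip_add_left, h0, zero_add, ← hipγ γ hγsupp]
        exact hγγ
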